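/- arXiv:2010.12354 — 5 statements merged into one kernel-verified Lean document; each statement's English description precedes it below -/
import Mathlib

section
/- Let N ≥ 1, let ρ₁, …, ρ_N be n×n density matrices (positive semidefinite with trace 1), and let π₁, …, π_N be nonnegative reals summing to 1. Then there exists a POVM {Π₁, …, Π_N} on ℂⁿ such that the error probability satisfies Σ_{i ≠ j} π_i · Tr(Π_j ρ_i) ≤ Σ_{i ≠ j} √(π_i π_j) · F(ρ_i, ρ_j). -/
open Matrix
open scoped ComplexOrder

/-- The positive semidefinite square root of a matrix (junk value 0 if not PSD). -/
noncomputable def matSqrt {ι : Type*} [Fintype ι] [DecidableEq ι]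
    (A : Matrix ι ι ℂ) : Matrix ι ι ℂ :=
  open scoped Classical in
  if h : A.PosSemidef then
    h.1.eigenvectorUnitary.1 * diagonal ((↑) ∘ (√·) ∘ h.1.eigenvalues) *
      (star h.1.eigenvectorUnitary : Matrix ι ι ℂ) else 0

/-- The fidelity F(ρ, σ) = Tr √(√ρ · σ · √ρ) between matrices. -/
noncomputable def mFid {ι : Type*} [Fintype ι] [DecidableEq ι]
    (ρ σ : Matrix ι ι ℂ) : ℝ :=
  ((matSqrt (matSqrt ρ * σ * matSqrt ρ)).trace).re

/-!
The measurement is the square-root measurement of the family `Mᵢ = √πᵢ · √ρᵢ`: with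
`T = ∑ Mᵢ`, take `Πⱼ = T^{-1/2} Mⱼ T^{-1/2}`, completed to a POVM on the kernel of `T`. Its
error on hypothesis `i` is at most `Tr Mᵢ² - Tr (T^{-1/2} Mᵢ T^{-1/2} Mᵢ²)`, and for
`0 ≤ M ≤ T` one has `2 Tr M² ≤ Tr (T M) + Tr (T^{-1/2} M T^{-1/2} M²)`: in an eigenbasis of `T`,
`Tr M² ≤ Re Tr (T^{1/2} M T^{-1/2} M)` because `M` vanishes on the kernel of `T` and
`a/b + b/a ≥ 2`, and the right-hand side is bounded by the AM-GM inequality for the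
Hilbert-Schmidt inner product. So the error on `i` is at most
`Tr (T Mᵢ) - Tr Mᵢ² = ∑_{j ≠ i} Tr (Mⱼ Mᵢ)`, and `Re Tr (√ρⱼ √ρᵢ) ≤ F(ρᵢ, ρⱼ)` because
`Re Tr X ≤ Tr √(X Xᴴ)`.
-/

open scoped MatrixOrder
open Unitary

theorem sum_sum_le_sum_sum_div_mul {ι : Type*} [Fintype ι] (s : ι → ℝ) (c : ι → ι → ℝ)
    (hc : ∀ k l, 0 ≤ c k l) (hsymm : ∀ k l, c k l = c l k)
    (hs : ∀ k l, c k l ≠ 0 → 0 < s k ∧ 0 < s l) :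
    ∑ k, ∑ l, c k l ≤ ∑ k, ∑ l, s k / s l * c k l := by
  have hterm : ∀ k l, 2 * c k l ≤ (s k / s l + s l / s k) * c k l := by
    intro k l
    rcases eq_or_ne (c k l) 0 with h | h
    · simp [h]
    obtain ⟨hk, hl⟩ := hs k l h
    refine mul_le_mul_of_nonneg_right ?_ (hc k l)
    rw [div_add_div _ _ hl.ne' hk.ne', le_div_iff₀ (by positivity)]
    nlinarith [sq_nonneg (s k - s l)]
  have hswap : ∑ k, ∑ l, s l / s k * c k l = ∑ k, ∑ l, s k / s l * c k l := by
    rw [Finset.sum_comm]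
    simp_rw [hsymm]
  have hsum := Finset.sum_le_sum fun k (_ : k ∈ Finset.univ) =>
    Finset.sum_le_sum fun l (_ : l ∈ Finset.univ) => hterm k l
  simp only [add_mul, Finset.sum_add_distrib, ← Finset.mul_sum, hswap] at hsum
  linarith

theorem sum_ite_eq_zero_sub {κ G : Type*} [Fintype κ] [DecidableEq κ] [AddCommGroup G] (i : κ)
    (f : κ → G) : ∑ j, (if i = j then 0 else f j) = ∑ j, f j - f i := by
  simp [Finset.sum_ite, Finset.filter_ne, Finset.sum_erase_eq_sub]

namespace Matrix

variable {𝕜 ι : Type*} [RCLike 𝕜] [Fintype ι]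

theorem mulVec_eq_zero_of_le {M T : Matrix ι ι 𝕜} (hM : 0 ≤ M) (hMT : M ≤ T) {v : ι → 𝕜}
    (hv : T *ᵥ v = 0) : M *ᵥ v = 0 := by
  have hM' := nonneg_iff_posSemidef.1 hM
  refine (hM'.dotProduct_mulVec_zero_iff v).1 (le_antisymm ?_ (hM'.dotProduct_mulVec_nonneg v))
  simpa [sub_mulVec, hv] using (le_iff.1 hMT).dotProduct_mulVec_nonneg v

theorem two_mul_re_trace_conjTranspose_mul_le (W V : Matrix ι ι 𝕜) :
    2 * RCLike.re (Wᴴ * V).trace ≤ RCLike.re (Wᴴ * W).trace + RCLike.re (Vᴴ * V).trace := by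
  have h := RCLike.nonneg_iff.1 (posSemidef_conjTranspose_mul_self (W - V)).trace_nonneg |>.1
  have hswap : RCLike.re (Vᴴ * W).trace = RCLike.re (Wᴴ * V).trace := by
    rw [← conjTranspose_conjTranspose W, ← conjTranspose_mul, trace_conjTranspose,
      conjTranspose_conjTranspose, RCLike.star_def, RCLike.conj_re]
  simp only [conjTranspose_sub, sub_mul, mul_sub, trace_sub, map_sub] at h
  linarith

theorem sq_norm_apply_le_re_mul_conjTranspose_apply (Z : Matrix ι ι 𝕜) (k l : ι) :
    ‖Z k l‖ ^ 2 ≤ RCLike.re ((Z * Zᴴ) k k) := by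
  simp only [mul_apply, conjTranspose_apply, RCLike.star_def, RCLike.mul_conj, map_sum,
    ← RCLike.ofReal_pow, RCLike.ofReal_re]
  exact Finset.single_le_sum (f := fun j => ‖Z k j‖ ^ 2) (fun j _ => by positivity)
    (Finset.mem_univ l)

variable [DecidableEq ι]

/-- `A^{-1/2}` on the range of `A`, and `0` on its kernel since `(√0)⁻¹ = 0`. -/
noncomputable def invSqrt (A : Matrix ι ι 𝕜) : Matrix ι ι 𝕜 :=
  cfc (fun x => (√x)⁻¹) A

theorem isSelfAdjoint_invSqrt (A : Matrix ι ι 𝕜) : IsSelfAdjoint (invSqrt A) :=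
  cfc_predicate _ A

theorem cfc_mul_cfc (A : Matrix ι ι 𝕜) (f g : ℝ → ℝ) :
    cfc f A * cfc g A = cfc (fun x => f x * g x) A :=
  (cfc_mul f g A (A.finite_real_spectrum.continuousOn f)
    (A.finite_real_spectrum.continuousOn g)).symm

theorem cfc_sqrt_mul_self {A : Matrix ι ι 𝕜} (hA : 0 ≤ A) :
    cfc Real.sqrt A * cfc Real.sqrt A = A := by
  rw [cfc_mul_cfc, cfc_congr fun x hx => Real.mul_self_sqrt (spectrum_nonneg_of_nonneg hA hx),
    cfc_id' ℝ A]

theorem invSqrt_mul_mul_invSqrt_le_one {A : Matrix ι ι 𝕜} (hA : 0 ≤ A) :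
    invSqrt A * A * invSqrt A ≤ 1 := by
  conv_lhs => enter [1, 2]; rw [← cfc_id' ℝ A]
  rw [invSqrt, cfc_mul_cfc, cfc_mul_cfc]
  refine cfc_le_one _ A fun x hx => ?_
  rw [mul_right_comm, ← mul_inv, Real.mul_self_sqrt (spectrum_nonneg_of_nonneg hA hx)]
  exact inv_mul_le_one

theorem trace_conjStarAlgAut (u : unitaryGroup ι 𝕜) (X : Matrix ι ι 𝕜) :
    (conjStarAlgAut 𝕜 _ u X).trace = X.trace := by
  rw [conjStarAlgAut_apply, trace_mul_cycle, coe_star_mul_self, one_mul]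

theorem trace_diagonal_mul_mul_diagonal_mul (d e : ι → 𝕜) (Y : Matrix ι ι 𝕜) :
    (diagonal d * Y * diagonal e * Y).trace = ∑ k, ∑ l, d k * e l * (Y k l * Y l k) := by
  refine Finset.sum_congr rfl fun k _ => ?_
  rw [diag, mul_apply]
  refine Finset.sum_congr rfl fun l _ => ?_
  rw [mul_diagonal, diagonal_mul]
  ring

namespace IsHermitian

variable {T : Matrix ι ι 𝕜} (hT : T.IsHermitian)
include hT

theorem trace_cfc_mul_cfc_mul (f g : ℝ → ℝ) (M : Matrix ι ι 𝕜) :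
    (cfc f T * M * cfc g T * M).trace =
      ∑ k, ∑ l, ((f (hT.eigenvalues k) * g (hT.eigenvalues l) : ℝ) : 𝕜) *
        ((conjStarAlgAut 𝕜 _ hT.eigenvectorUnitary).symm M k l *
          (conjStarAlgAut 𝕜 _ hT.eigenvectorUnitary).symm M l k) := by
  set φ := conjStarAlgAut 𝕜 (Matrix ι ι 𝕜) hT.eigenvectorUnitary
  rw [hT.cfc_eq, hT.cfc_eq, IsHermitian.cfc, IsHermitian.cfc, ← φ.apply_symm_apply M, ← map_mul,
    ← map_mul, ← map_mul, trace_conjStarAlgAut, φ.apply_symm_apply,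
    trace_diagonal_mul_mul_diagonal_mul]
  simp

theorem conjStarAlgAut_symm_apply_eq_zero {M : Matrix ι ι 𝕜} (hM : 0 ≤ M) (hMT : M ≤ T) (k : ι)
    {l : ι} (hl : hT.eigenvalues l = 0) :
    (conjStarAlgAut 𝕜 _ hT.eigenvectorUnitary).symm M k l = 0 := by
  have hv : T *ᵥ ⇑(hT.eigenvectorBasis l) = 0 := by
    rw [hT.mulVec_eigenvectorBasis, hl, zero_smul]
  have hcol := congrFun (mulVec_single_one ((conjStarAlgAut 𝕜 _ hT.eigenvectorUnitary).symm M) l) k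
  rw [col_apply] at hcol
  rw [← hcol, conjStarAlgAut_symm_apply, ← mulVec_mulVec, eigenvectorUnitary_mulVec,
    ← mulVec_mulVec, mulVec_eq_zero_of_le hM hMT hv, mulVec_zero, Pi.zero_apply]

end IsHermitian

theorem re_trace_mul_self_le {M T : Matrix ι ι 𝕜} (hM : 0 ≤ M) (hMT : M ≤ T) :
    RCLike.re (M * M).trace ≤ RCLike.re (cfc Real.sqrt T * M * invSqrt T * M).trace := by
  have hT' := nonneg_iff_posSemidef.1 (hM.trans hMT)
  have hT : T.IsHermitian := hT'.1
  set Y := (conjStarAlgAut 𝕜 _ hT.eigenvectorUnitary).symm M with hYdef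
  have hY : Y.IsHermitian := by
    rw [IsHermitian, ← star_eq_conjTranspose, hYdef, ← map_star,
      (nonneg_iff_posSemidef.1 hM).1.star_eq]
  have hYY : ∀ k l, Y k l * Y l k = ((‖Y k l‖ ^ 2 : ℝ) : 𝕜) := by
    intro k l
    rw [← hY.apply l k, RCLike.star_def, RCLike.mul_conj, RCLike.ofReal_pow]
  have hsupp : ∀ k l, ‖Y k l‖ ^ 2 ≠ 0 → 0 < √(hT.eigenvalues k) ∧ 0 < √(hT.eigenvalues l) := by
    intro k l h
    have hne : Y k l ≠ 0 := fun h0 => h (by rw [h0, norm_zero, sq, mul_zero])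
    have hpos : ∀ m, hT.eigenvalues m ≠ 0 → 0 < √(hT.eigenvalues m) := fun m hm =>
      Real.sqrt_pos.2 ((hT'.eigenvalues_nonneg m).lt_of_ne' hm)
    have hY0 : ∀ k l, hT.eigenvalues l = 0 → Y k l = 0 := fun k _ =>
      hT.conjStarAlgAut_symm_apply_eq_zero hM hMT k
    refine ⟨hpos k fun hk => hne ?_, hpos l fun hl => hne (hY0 k l hl)⟩
    rw [← hY.apply k l, hY0 l k hk, star_zero]
  have hMM : M * M = cfc (fun _ => (1 : ℝ)) T * M * cfc (fun _ => (1 : ℝ)) T * M := by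
    rw [cfc_const_one ℝ T, one_mul, mul_one]
  rw [hMM, invSqrt, hT.trace_cfc_mul_cfc_mul, hT.trace_cfc_mul_cfc_mul]
  simp only [← hYdef, hYY, ← RCLike.ofReal_mul, map_sum, RCLike.ofReal_re, one_mul,
    ← div_eq_mul_inv]
  exact sum_sum_le_sum_sum_div_mul _ _ (fun k l => by positivity)
    (fun k l => by rw [← hY.apply l k, norm_star]) hsupp

theorem two_mul_re_trace_mul_self_le {M T : Matrix ι ι 𝕜} (hM : 0 ≤ M) (hMT : M ≤ T) :
    2 * RCLike.re (M * M).trace ≤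
      RCLike.re (T * M).trace + RCLike.re (invSqrt T * M * invSqrt T * (M * M)).trace := by
  set S := cfc Real.sqrt T
  set R := invSqrt T
  set m := cfc Real.sqrt M
  have hSh : Sᴴ = S := (cfc_predicate Real.sqrt T).star_eq
  have hRh : Rᴴ = R := (isSelfAdjoint_invSqrt T).star_eq
  have hmh : mᴴ = m := (cfc_predicate Real.sqrt M).star_eq
  have hMh : Mᴴ = M := (nonneg_iff_posSemidef.1 hM).1
  have hSS : S * S = T := cfc_sqrt_mul_self (hM.trans hMT)
  have hmm : ∀ X, m * (m * X) = M * X := fun X => by rw [← Matrix.mul_assoc, cfc_sqrt_mul_self hM]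
  have hcross : (m * S)ᴴ * (m * R * M) = S * M * R * M := by
    rw [conjTranspose_mul, hSh, hmh]
    simp only [Matrix.mul_assoc, hmm]
  have hleft : ((m * S)ᴴ * (m * S)).trace = (T * M).trace := by
    rw [conjTranspose_mul, hSh, hmh, Matrix.mul_assoc, hmm, trace_mul_comm, Matrix.mul_assoc, hSS,
      trace_mul_comm]
  have hright : ((m * R * M)ᴴ * (m * R * M)).trace = (R * M * R * (M * M)).trace := by
    rw [conjTranspose_mul, conjTranspose_mul, hMh, hRh, hmh]
    simp only [Matrix.mul_assoc, hmm]
    rw [trace_mul_comm]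
    simp only [Matrix.mul_assoc]
  have hamgm := two_mul_re_trace_conjTranspose_mul_le (m * S) (m * R * M)
  rw [hcross, hleft, hright] at hamgm
  linarith [re_trace_mul_self_le hM hMT]

theorem re_trace_mul_nonneg {A B : Matrix ι ι 𝕜} (hA : 0 ≤ A) (hB : 0 ≤ B) :
    0 ≤ RCLike.re (A * B).trace := by
  have hconj := star_left_conjugate_nonneg hA (cfc Real.sqrt B)
  rw [(cfc_predicate Real.sqrt B).star_eq] at hconj
  rw [← cfc_sqrt_mul_self hB, ← Matrix.mul_assoc, trace_mul_comm, ← Matrix.mul_assoc]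
  exact (RCLike.nonneg_iff.1 (nonneg_iff_posSemidef.1 hconj).trace_nonneg).1

theorem re_trace_le_re_trace_cfc_sqrt_mul_conjTranspose (X : Matrix ι ι 𝕜) :
    RCLike.re X.trace ≤ RCLike.re (cfc Real.sqrt (X * Xᴴ)).trace := by
  have hK := isHermitian_mul_conjTranspose_self X
  set φ := conjStarAlgAut 𝕜 (Matrix ι ι 𝕜) hK.eigenvectorUnitary
  set Z := φ.symm X
  have hZZ : Z * Zᴴ = diagonal (RCLike.ofReal ∘ hK.eigenvalues) := by
    rw [← star_eq_conjTranspose, ← map_star, ← map_mul, star_eq_conjTranspose, conjStarAlgAut_symm,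
      hK.conjStarAlgAut_star_eigenvectorUnitary]
  conv_lhs => rw [← φ.apply_symm_apply X, trace_conjStarAlgAut]
  rw [hK.cfc_eq, IsHermitian.cfc, trace_conjStarAlgAut, trace_diagonal, map_sum, trace, map_sum]
  refine Finset.sum_le_sum fun k _ => ?_
  have hk := sq_norm_apply_le_re_mul_conjTranspose_apply Z k k
  rw [hZZ, diagonal_apply_eq, Function.comp_apply, RCLike.ofReal_re] at hk
  calc RCLike.re (Z k k) ≤ ‖Z k k‖ := RCLike.re_le_norm _
    _ ≤ √(hK.eigenvalues k) := Real.le_sqrt_of_sq_le hk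
    _ = _ := by simp

variable {κ : Type*} [Fintype κ]

/-- The square-root measurement of `M`, with the projection onto the kernel of `∑ i, M i`
shared equally among the outcomes. -/
noncomputable def sqrtMeasurement (M : κ → Matrix ι ι 𝕜) (j : κ) : Matrix ι ι 𝕜 :=
  invSqrt (∑ i, M i) * M j * invSqrt (∑ i, M i) +
    (Fintype.card κ : ℝ)⁻¹ • (1 - invSqrt (∑ i, M i) * (∑ i, M i) * invSqrt (∑ i, M i))

theorem sqrtMeasurement_nonneg {M : κ → Matrix ι ι 𝕜} (hM : ∀ i, 0 ≤ M i) (j : κ) :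
    0 ≤ sqrtMeasurement M j := by
  have hconj := star_left_conjugate_nonneg (hM j) (invSqrt (∑ i, M i))
  rw [(isSelfAdjoint_invSqrt _).star_eq] at hconj
  exact add_nonneg hconj (smul_nonneg (by positivity)
    (sub_nonneg.2 (invSqrt_mul_mul_invSqrt_le_one (Finset.sum_nonneg fun i _ => hM i))))

theorem sum_sqrtMeasurement [Nonempty κ] (M : κ → Matrix ι ι 𝕜) :
    ∑ j, sqrtMeasurement M j = 1 := by
  simp only [sqrtMeasurement, Finset.sum_add_distrib, ← Finset.sum_mul, ← Finset.mul_sum,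
    Finset.sum_const, Finset.card_univ, ← Nat.cast_smul_eq_nsmul ℝ, smul_smul,
    mul_inv_cancel₀ ((Nat.cast_ne_zero (R := ℝ)).2 Fintype.card_ne_zero), one_smul, add_sub_cancel]

theorem sqrtMeasurement_error_le [DecidableEq κ] [Nonempty κ] {M : κ → Matrix ι ι 𝕜}
    (hM : ∀ i, 0 ≤ M i) (i : κ) :
    ∑ j, (if i = j then 0 else RCLike.re (sqrtMeasurement M j * (M i * M i)).trace) ≤
      ∑ j, (if i = j then 0 else RCLike.re (M j * M i).trace) := by
  set T := ∑ j, M j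
  set R := invSqrt T
  have hMT : M i ≤ T := Finset.single_le_sum (fun j _ => hM j) (Finset.mem_univ i)
  have htotal : ∑ j, RCLike.re (sqrtMeasurement M j * (M i * M i)).trace =
      RCLike.re (M i * M i).trace := by
    rw [← map_sum, ← trace_sum, ← Finset.sum_mul, sum_sqrtMeasurement, one_mul]
  have hcross : ∑ j, RCLike.re (M j * M i).trace = RCLike.re (T * M i).trace := by
    rw [← map_sum, ← trace_sum, ← Finset.sum_mul]
  have hMM : 0 ≤ M i * M i := by
    simpa [(hM i).isSelfAdjoint.star_eq] using star_mul_self_nonneg (M i)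
  have hkernel : 0 ≤ (Fintype.card κ : ℝ)⁻¹ • (1 - R * T * R) := smul_nonneg (by positivity)
    (sub_nonneg.2 (invSqrt_mul_mul_invSqrt_le_one (Finset.sum_nonneg fun j _ => hM j)))
  have hPi : RCLike.re (sqrtMeasurement M i * (M i * M i)).trace =
      RCLike.re (R * M i * R * (M i * M i)).trace +
        RCLike.re (((Fintype.card κ : ℝ)⁻¹ • (1 - R * T * R)) * (M i * M i)).trace := by
    rw [sqrtMeasurement, add_mul, trace_add, map_add]
  rw [sum_ite_eq_zero_sub, sum_ite_eq_zero_sub, htotal, hcross]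
  linarith [two_mul_re_trace_mul_self_le (hM i) hMT, re_trace_mul_nonneg hkernel hMM]

end Matrix

section

variable {ι : Type*} [Fintype ι] [DecidableEq ι]

theorem matSqrt_eq_cfc {A : Matrix ι ι ℂ} (hA : A.PosSemidef) : matSqrt A = cfc Real.sqrt A := by
  rw [matSqrt, dif_pos hA, hA.1.cfc_eq, IsHermitian.cfc, conjStarAlgAut_apply]
  rfl

theorem matSqrt_nonneg {A : Matrix ι ι ℂ} (hA : A.PosSemidef) : 0 ≤ matSqrt A := by
  rw [matSqrt_eq_cfc hA]
  exact cfc_nonneg fun x _ => Real.sqrt_nonneg x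

theorem matSqrt_mul_self {A : Matrix ι ι ℂ} (hA : A.PosSemidef) : matSqrt A * matSqrt A = A := by
  rw [matSqrt_eq_cfc hA, cfc_sqrt_mul_self (nonneg_iff_posSemidef.2 hA)]

theorem re_trace_matSqrt_mul_matSqrt_le_mFid {ρ σ : Matrix ι ι ℂ} (hρ : ρ.PosSemidef)
    (hσ : σ.PosSemidef) : (matSqrt ρ * matSqrt σ).trace.re ≤ mFid ρ σ := by
  have hX : matSqrt ρ * σ * matSqrt ρ = matSqrt ρ * matSqrt σ * (matSqrt ρ * matSqrt σ)ᴴ := by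
    rw [conjTranspose_mul, (nonneg_iff_posSemidef.1 (matSqrt_nonneg hρ)).1,
      (nonneg_iff_posSemidef.1 (matSqrt_nonneg hσ)).1, Matrix.mul_assoc (matSqrt ρ) (matSqrt σ),
      ← Matrix.mul_assoc (matSqrt σ), matSqrt_mul_self hσ, Matrix.mul_assoc]
  rw [mFid, hX, matSqrt_eq_cfc (posSemidef_self_mul_conjTranspose _)]
  exact re_trace_le_re_trace_cfc_sqrt_mul_conjTranspose (matSqrt ρ * matSqrt σ)

end

theorem pgm_fidelity_upper_bound_general (N n : ℕ) (hN : 1 ≤ N)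
    (ρ : Fin N → Matrix (Fin n) (Fin n) ℂ)
    (hρ : ∀ i, (ρ i).PosSemidef)
    (π : Fin N → ℝ) (hπ : ∀ i, 0 ≤ π i) :
    ∃ P : Fin N → Matrix (Fin n) (Fin n) ℂ,
      (∀ j, (P j).PosSemidef) ∧ (∑ j, P j = 1) ∧
        (∑ i, ∑ j, if i = j then 0 else π i * ((P j * ρ i).trace).re) ≤
          ∑ i, ∑ j, if i = j then 0
            else Real.sqrt (π i * π j) * mFid (ρ i) (ρ j) := by
  have : Nonempty (Fin N) := ⟨⟨0, hN⟩⟩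
  set M : Fin N → Matrix (Fin n) (Fin n) ℂ := fun i => √(π i) • matSqrt (ρ i)
  have hM : ∀ i, 0 ≤ M i := fun i => smul_nonneg (Real.sqrt_nonneg _) (matSqrt_nonneg (hρ i))
  have hMM : ∀ i, M i * M i = π i • ρ i := fun i => by
    rw [smul_mul_smul, Real.mul_self_sqrt (hπ i), matSqrt_mul_self (hρ i)]
  have hMji : ∀ i j, (M j * M i).trace.re ≤ √(π i * π j) * mFid (ρ i) (ρ j) := fun i j => by
    rw [smul_mul_smul, trace_smul, Complex.smul_re, smul_eq_mul, Real.sqrt_mul (hπ i),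
      mul_comm (√(π j)), trace_mul_comm]
    exact mul_le_mul_of_nonneg_left (re_trace_matSqrt_mul_matSqrt_le_mFid (hρ i) (hρ j))
      (by positivity)
  refine ⟨sqrtMeasurement M, fun j => nonneg_iff_posSemidef.1 (sqrtMeasurement_nonneg hM j),
    sum_sqrtMeasurement M, Finset.sum_le_sum fun i _ => ?_⟩
  calc _ = ∑ j, if i = j then 0 else RCLike.re (sqrtMeasurement M j * (M i * M i)).trace := by
        simp only [hMM, mul_smul_comm, trace_smul, RCLike.re_to_complex, Complex.smul_re,
          smul_eq_mul]
    _ ≤ ∑ j, if i = j then 0 else RCLike.re (M j * M i).trace := sqrtMeasurement_error_le hM i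
    _ ≤ _ := Finset.sum_le_sum fun j _ => by
        split_ifs
        exacts [le_rfl, hMji i j]

/-- Pretty-good-measurement upper bound: there exists a POVM whose
misclassification probability is at most Σ_{i≠j} √(π_i π_j) F(ρ_i, ρ_j). -/
theorem pgm_fidelity_upper_bound (N n : ℕ) (hN : 1 ≤ N)
    (ρ : Fin N → Matrix (Fin n) (Fin n) ℂ)
    (hρ : ∀ i, (ρ i).PosSemidef) (htr : ∀ i, (ρ i).trace = 1)
    (π : Fin N → ℝ) (hπ : ∀ i, 0 ≤ π i) (hπsum : ∑ i, π i = 1) :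
    ∃ P : Fin N → Matrix (Fin n) (Fin n) ℂ,
      (∀ j, (P j).PosSemidef) ∧ (∑ j, P j = 1) ∧
        (∑ i, ∑ j, if i = j then 0 else π i * ((P j * ρ i).trace).re) ≤
          ∑ i, ∑ j, if i = j then 0
            else Real.sqrt (π i * π j) * mFid (ρ i) (ρ j) :=
  pgm_fidelity_upper_bound_general N n hN ρ hρ π hπ
end

section
/- Let m, v, u, t be natural numbers with max(v, u) ≤ t ≤ v + u. Then the number of ordered pairs (i, i') of binary patterns on Fin m with Hamming weight |i| = v, |i'| = u, and Hamming distance d(i, i') = 2t − (v + u) (equivalently, with the union of their supports having exactly t elements) equals C(m, t) · C(t, u) · C(u, (v+u) − t), where C denotes the binomial coefficient. -/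
/-- Hamming weight of a binary pattern: the number of positions with value true. -/
def patWeight {α : Type*} [Fintype α] (i : α → Bool) : ℕ :=
  (Finset.univ.filter fun x => i x = true).card

/-!
Through supports, a pair of patterns is a pair of sets `(A, B)`, and
`d(i, i') + |A| + |B| = 2 |A ∪ B|`, so the distance condition says `|A ∪ B| = t`.
Such pairs are counted by choosing `S = A ∪ B` (`C(m, t)` ways), then `B ⊆ S` (`C(t, u)`),
then `A ∩ B ⊆ B`, which determines `A = (S \ B) ∪ (A ∩ B)` and must have
`v - (t - u)` elements (`C(u, v + u - t)`).
-/

open Finset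

section Patterns

variable {α : Type*} [Fintype α]

def patSupport (i : α → Bool) : Finset α := {x | i x = true}

theorem patWeight_eq_card_patSupport (i : α → Bool) : patWeight i = #(patSupport i) := rfl

variable [DecidableEq α]

def patSupportEquiv : (α → Bool) ≃ Finset α where
  toFun := patSupport
  invFun s x := decide (x ∈ s)
  left_inv i := by ext x; simp [patSupport]
  right_inv s := by ext x; simp [patSupport]

theorem hammingDist_eq_card_sdiff_union_sdiff (i i' : α → Bool) :
    hammingDist i i' = #(patSupport i \ patSupport i' ∪ patSupport i' \ patSupport i) := by
  unfold hammingDist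
  congr 1
  ext x
  simp only [mem_filter, mem_univ, true_and, mem_union, mem_sdiff, patSupport]
  cases i x <;> cases i' x <;> decide

theorem hammingDist_add_patWeight_add_patWeight (i i' : α → Bool) :
    hammingDist i i' + patWeight i + patWeight i' = 2 * #(patSupport i ∪ patSupport i') := by
  rw [hammingDist_eq_card_sdiff_union_sdiff, card_union_of_disjoint disjoint_sdiff_sdiff,
    patWeight_eq_card_patSupport, patWeight_eq_card_patSupport]
  have h₁ := card_sdiff_add_card (patSupport i) (patSupport i')
  have h₂ := card_sdiff_add_card (patSupport i') (patSupport i)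
  rw [union_comm] at h₂
  omega

end Patterns

section FinsetPairs

variable {α : Type*} [DecidableEq α]

theorem card_filter_union_eq_of_subset {S B : Finset α} (hBS : B ⊆ S) (k : ℕ) :
    #{A ∈ S.powerset | A ∪ B = S ∧ #A = #(S \ B) + k} = (#B).choose k := by
  rw [← card_powersetCard k B]
  refine card_nbij' (· ∩ B) ((S \ B) ∪ ·) ?_ ?_ ?_ ?_
  · rintro A hA
    simp only [mem_coe, mem_filter, mem_powerset] at hA
    obtain ⟨-, rfl, hcard⟩ := hA
    simp only [mem_coe, mem_powersetCard]
    refine ⟨inter_subset_right, ?_⟩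
    have := card_sdiff_add_card_inter A B
    rw [union_sdiff_right] at hcard
    omega
  · rintro C hC
    simp only [mem_coe, mem_powersetCard] at hC
    simp only [mem_coe, mem_filter, mem_powerset]
    refine ⟨union_subset sdiff_subset (hC.1.trans hBS), ?_, ?_⟩
    · grind
    · rw [card_union_of_disjoint (disjoint_sdiff_self_left.mono_right hC.1), hC.2]
  · rintro A hA
    simp only [mem_coe, mem_filter, mem_powerset] at hA
    grind
  · rintro C hC
    simp only [mem_coe, mem_powersetCard] at hC
    grind

theorem card_finset_pairs_by_card_union [Fintype α] {v u t : ℕ} (htvu : t ≤ v + u) :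
    #{p : Finset α × Finset α | #p.1 = v ∧ #p.2 = u ∧ #(p.1 ∪ p.2) = t} =
      (Fintype.card α).choose t * t.choose u * u.choose (v + u - t) := by
  have hsigma : #{p : Finset α × Finset α | #p.1 = v ∧ #p.2 = u ∧ #(p.1 ∪ p.2) = t} =
      #((powersetCard t (univ : Finset α)).sigma fun S => (S.powersetCard u).sigma fun B =>
        {A ∈ S.powerset | A ∪ B = S ∧ #A = v}) := by
    refine card_nbij' (fun p => (⟨p.1 ∪ p.2, p.2, p.1⟩ : Σ _ : Finset α, Σ _ : Finset α, Finset α))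
      (fun s => (s.2.2, s.2.1)) ?_ ?_ ?_ ?_
    · rintro ⟨A, B⟩ hp
      simp only [mem_coe, mem_filter, mem_univ, true_and] at hp
      simp [hp, subset_union_left, subset_union_right]
    · rintro ⟨S, B, A⟩ hs
      simp only [mem_coe, mem_sigma, mem_powersetCard, mem_filter, mem_powerset] at hs
      obtain ⟨⟨-, rfl⟩, ⟨-, rfl⟩, -, rfl, rfl⟩ := hs
      simp
    · intro p _
      rfl
    · rintro ⟨S, B, A⟩ hs
      simp only [mem_coe, mem_sigma, mem_powersetCard, mem_filter, mem_powerset] at hs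
      obtain ⟨-, -, -, rfl, -⟩ := hs
      rfl
  rw [hsigma, card_sigma, sum_const_nat (m := t.choose u * u.choose (v + u - t)),
    card_powersetCard, card_univ, mul_assoc]
  intro S hS
  rw [mem_powersetCard] at hS
  rw [card_sigma, sum_const_nat (m := u.choose (v + u - t)), card_powersetCard, hS.2]
  intro B hB
  rw [mem_powersetCard] at hB
  have hut : u ≤ t := hS.2 ▸ hB.2 ▸ card_le_card hB.1
  have hv : v = #(S \ B) + (v + u - t) := by rw [card_sdiff_of_subset hB.1]; omega
  have hfiber := card_filter_union_eq_of_subset hB.1 (v + u - t)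
  rwa [← hv, hB.2] at hfiber

end FinsetPairs

/-- Counting pattern pairs: the number of ordered pairs (i, i') with weights v and u
and Hamming distance 2t − (v+u) equals C(m,t)·C(t,u)·C(u,(v+u)−t). -/
theorem card_pattern_pairs_fixed_hammingDist (m v u t : ℕ)
    (h1 : max v u ≤ t) (h2 : t ≤ v + u) :
    ((Finset.univ : Finset ((Fin m → Bool) × (Fin m → Bool))).filter fun p =>
        patWeight p.1 = v ∧ patWeight p.2 = u ∧
          hammingDist p.1 p.2 = 2 * t - (v + u)).card =
      Nat.choose m t * Nat.choose t u * Nat.choose u ((v + u) - t) := by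
  calc _ = #{q : Finset (Fin m) × Finset (Fin m) | #q.1 = v ∧ #q.2 = u ∧ #(q.1 ∪ q.2) = t} := by
        refine card_equiv (patSupportEquiv.prodCongr patSupportEquiv) fun p => ?_
        have hdist := hammingDist_add_patWeight_add_patWeight p.1 p.2
        simp only [mem_filter, mem_univ, true_and, Equiv.prodCongr_apply, Prod.map_fst,
          Prod.map_snd, patSupportEquiv, Equiv.coe_fn_mk, ← patWeight_eq_card_patSupport]
        omega
    _ = _ := by rw [card_finset_pairs_by_card_union h2, Fintype.card_fin]
end

section
/- Let m ≥ 1 and k ≥ 1 with k ≤ m, and let h : ℕ → ℝ be any function. Then Σ over all ordered pairs (i, i') of DISTINCT binary patterns on Fin m, each of Hamming weight k, of h(d(i, i')) equals Σ_{t=k+1}^{2k} C(m, t) · C(t, k) · C(k, 2k − t) · h(2(t − k)), where C denotes the binomial coefficient and d the Hamming distance. -/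
/-!
Identify a pattern with its set of `true` positions: weight becomes cardinality and Hamming
distance becomes the size of the symmetric difference. For `k`-sets `A ≠ B` with
`t = #(A ∪ B)`, `B` meets `A` in `2k - t` points and has `t - k` points outside `A`, so
`#(A ∆ B) = 2 (t - k)` and, for fixed `A`, there are `C(k, 2k - t) C(m - k, t - k)` such `B`.
Summing over the `C(m, k)` choices of `A` and using `C(m, k) C(m - k, t - k) = C(m, t) C(t, k)`
gives the formula.
-/

open Finset
open scoped symmDiff

section

variable {α : Type*} [DecidableEq α]

lemma card_sdiff_pos_iff_ne_of_card_eq {s t : Finset α} (h : #s = #t) :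
    0 < #(t \ s) ↔ s ≠ t := by
  rw [card_pos, sdiff_nonempty, ne_comm, subset_iff_eq_of_card_le h.le]

lemma card_symmDiff_eq_two_mul_of_card_eq {s t : Finset α} (h : #s = #t) :
    #(s ∆ t) = 2 * #(t \ s) := by
  rw [Finset.symmDiff_def, card_union_of_disjoint disjoint_sdiff_sdiff,
    card_sdiff_comm h, two_mul]

variable [Fintype α]

def boolFunEquivFinset : (α → Bool) ≃ Finset α where
  toFun i := {x | i x = true}
  invFun s x := decide (x ∈ s)
  left_inv i := by funext x; simp
  right_inv s := by ext x; simp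

lemma card_boolFunEquivFinset (i : α → Bool) : #(boolFunEquivFinset i) = patWeight i := rfl

lemma hammingDist_eq_card_symmDiff (i j : α → Bool) :
    hammingDist i j = #(boolFunEquivFinset i ∆ boolFunEquivFinset j) := by
  unfold hammingDist
  congr 1
  ext x
  simp only [boolFunEquivFinset, Equiv.coe_fn_mk, mem_filter, mem_univ, true_and, mem_symmDiff]
  cases i x <;> cases j x <;> simp

lemma union_inter_eq_and_union_sdiff_eq {A C D : Finset α} (hC : C ⊆ A) (hD : D ⊆ Aᶜ) :
    (C ∪ D) ∩ A = C ∧ (C ∪ D) \ A = D := by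
  constructor <;> ext x <;> have := @hC x <;> have := @hD x <;> simp at * <;> tauto

/-- Via the bijection `B ↦ (B ∩ A, B \ A)` onto pairs of subsets of `A` and of `Aᶜ`. -/
lemma card_filter_card_inter_eq_card_sdiff_eq (A : Finset α) (i j : ℕ) :
    #{B : Finset α | #(B ∩ A) = i ∧ #(B \ A) = j} =
      (#A).choose i * (Fintype.card α - #A).choose j := by
  rw [← card_compl, ← card_powersetCard, ← card_powersetCard, ← card_product]
  refine card_nbij' (fun B => (B ∩ A, B \ A)) (fun p => p.1 ∪ p.2) ?_ ?_ ?_ ?_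
  · intro B hB
    simp_all [subset_compl_iff_disjoint_right, disjoint_sdiff_self_left]
  · rintro ⟨C, D⟩ hCD
    simp only [coe_product, Set.mem_prod, mem_coe, mem_powersetCard] at hCD
    obtain ⟨⟨hCA, rfl⟩, hDA, rfl⟩ := hCD
    simp [union_inter_eq_and_union_sdiff_eq hCA hDA]
  · intro B _
    ext x
    simp only [mem_union, mem_inter, mem_sdiff]
    tauto
  · rintro ⟨C, D⟩ hCD
    simp only [coe_product, Set.mem_prod, mem_coe, mem_powersetCard] at hCD
    simp [union_inter_eq_and_union_sdiff_eq hCD.1.1 hCD.2.1]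

variable {M : Type*} [AddCommMonoid M]

lemma sum_card_symmDiff_of_card_eq {k : ℕ} (A : Finset α) (hA : #A = k) (f : ℕ → M) :
    ∑ B ∈ {B : Finset α | A ≠ B ∧ #B = k}, f #(A ∆ B) =
      ∑ t ∈ Icc (k + 1) (2 * k),
        (k.choose (2 * k - t) * (Fintype.card α - k).choose (t - k)) • f (2 * (t - k)) := by
  have card_split (B : Finset α) : #B = #(B ∩ A) + #(B \ A) ∧ #(A ∪ B) = k + #(B \ A) := by
    rw [card_inter_add_card_sdiff, union_comm, ← card_sdiff_add_card, hA, add_comm]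
    exact ⟨rfl, rfl⟩
  have ne_iff (B : Finset α) (hB : #B = k) : A ≠ B ↔ 0 < #(B \ A) :=
    (card_sdiff_pos_iff_ne_of_card_eq (hA.trans hB.symm)).symm
  have maps : ∀ B ∈ ({B | A ≠ B ∧ #B = k} : Finset (Finset α)),
      #(A ∪ B) ∈ Icc (k + 1) (2 * k) := by
    intro B hB
    simp only [mem_filter, mem_univ, true_and] at hB
    have := (ne_iff B hB.2).1 hB.1
    have := card_split B
    simp only [mem_Icc]
    omega
  rw [← sum_fiberwise_of_maps_to maps]
  refine sum_congr rfl fun t ht => ?_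
  rw [mem_Icc] at ht
  have fiber : {B ∈ ({B | A ≠ B ∧ #B = k} : Finset (Finset α)) | #(A ∪ B) = t} =
      ({B | #(B ∩ A) = 2 * k - t ∧ #(B \ A) = t - k} : Finset (Finset α)) := by
    ext B
    simp only [mem_filter, mem_univ, true_and]
    have := card_split B
    constructor
    · rintro ⟨⟨-, hB⟩, hBt⟩
      omega
    · rintro ⟨hi, hj⟩
      have hB : #B = k := by omega
      exact ⟨⟨(ne_iff B hB).2 (by omega), hB⟩, by omega⟩
  have dist : ∀ B ∈ ({B | #(B ∩ A) = 2 * k - t ∧ #(B \ A) = t - k} : Finset (Finset α)),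
      f #(A ∆ B) = f (2 * (t - k)) := by
    intro B hB
    simp only [mem_filter, mem_univ, true_and] at hB
    have := card_split B
    rw [card_symmDiff_eq_two_mul_of_card_eq (by omega), hB.2]
  rw [fiber, sum_congr rfl dist, sum_const, card_filter_card_inter_eq_card_sdiff_eq, hA]

theorem sum_pairs_card_symmDiff (k : ℕ) (f : ℕ → M) :
    ∑ q ∈ {q : Finset α × Finset α | q.1 ≠ q.2 ∧ #q.1 = k ∧ #q.2 = k}, f #(q.1 ∆ q.2) =
      ∑ t ∈ Icc (k + 1) (2 * k),
        ((Fintype.card α).choose t * t.choose k * k.choose (2 * k - t)) • f (2 * (t - k)) := by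
  rw [sum_finset_product _ (powersetCard k univ)
    (fun A => ({B | A ≠ B ∧ #B = k} : Finset _))
    (by simp only [mem_filter, mem_univ, true_and, mem_powersetCard, subset_univ]; tauto)]
  rw [sum_congr rfl fun A hA => sum_card_symmDiff_of_card_eq A (mem_powersetCard.1 hA).2 f,
    sum_const, card_powersetCard, card_univ, smul_sum]
  refine sum_congr rfl fun t ht => ?_
  rw [smul_smul, Nat.choose_mul (Nat.le_of_succ_le (mem_Icc.1 ht).1)]
  congr 1
  ring

end

theorem sum_kCPF_pairs_eq_degeneracy_sum_general (m k : ℕ)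
    (h : ℕ → ℝ) :
    (∑ p ∈ (Finset.univ : Finset ((Fin m → Bool) × (Fin m → Bool))).filter
        (fun p => p.1 ≠ p.2 ∧ patWeight p.1 = k ∧ patWeight p.2 = k),
      h (hammingDist p.1 p.2)) =
      ∑ t ∈ Finset.Icc (k + 1) (2 * k),
        (Nat.choose m t * Nat.choose t k * Nat.choose k (2 * k - t) : ℝ) *
          h (2 * (t - k)) := by
  let e := (boolFunEquivFinset (α := Fin m)).prodCongr (boolFunEquivFinset (α := Fin m))
  calc
    _ = ∑ q ∈ {q : Finset (Fin m) × Finset (Fin m) | q.1 ≠ q.2 ∧ #q.1 = k ∧ #q.2 = k},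
          h #(q.1 ∆ q.2) :=
      sum_equiv e (by simp [e, card_boolFunEquivFinset])
        fun p _ => congrArg h (hammingDist_eq_card_symmDiff p.1 p.2)
    _ = _ := by
      rw [sum_pairs_card_symmDiff, Fintype.card_fin]
      simp only [nsmul_eq_mul, Nat.cast_mul]

/-- Degeneracy collapse of fidelity sums over the k-CPF image space: a sum of any
function of the Hamming distance over distinct weight-k pattern pairs collapses to
a weighted sum over distance classes, Σ_{t=k+1}^{2k} C(m,t)C(t,k)C(k,2k−t) h(2(t−k)). -/
theorem sum_kCPF_pairs_eq_degeneracy_sum (m k : ℕ) (hk : 1 ≤ k) (hkm : k ≤ m)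
    (h : ℕ → ℝ) :
    (∑ p ∈ (Finset.univ : Finset ((Fin m → Bool) × (Fin m → Bool))).filter
        (fun p => p.1 ≠ p.2 ∧ patWeight p.1 = k ∧ patWeight p.2 = k),
      h (hammingDist p.1 p.2)) =
      ∑ t ∈ Finset.Icc (k + 1) (2 * k),
        (Nat.choose m t * Nat.choose t k * Nat.choose k (2 * k - t) : ℝ) *
          h (2 * (t - k)) :=
  sum_kCPF_pairs_eq_degeneracy_sum_general m k h
end

section
/- Let k ≥ 1 and m = 2k. Let g : (Bool × Bool) → (Bool × Bool) → ℝ be a function and F01, F12, F11, F02 real numbers such that: g(p, p) = 1 for all p; g((0,0),(0,1)) = g((0,0),(1,0)) = g((0,1),(0,0)) = g((1,0),(0,0)) = F01; g((0,1),(1,1)) = g((1,0),(1,1)) = g((1,1),(0,1)) = g((1,1),(1,0)) = F12; g((0,1),(1,0)) = g((1,0),(0,1)) = F11; and g((0,0),(1,1)) = g((1,1),(0,0)) = F02. Then (1/2^m) · Σ over all ordered pairs (i, i') of DISTINCT binary patterns on Fin m of Π_{j=0}^{k−1} g((i(2j), i(2j+1)), (i'(2j), i'(2j+1))) equals (1 +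 F01 + F12 + (F11 + F02)/2)^k − 1. -/
/-! Grouping each pattern on `Fin (2k)` into `k` channel pairs turns the sum into a sum over pairs
of tuples `Fin k → Bool × Bool` of a product over coordinates, which factorizes: the sum over all
pairs is `(∑ a b, g a b)^k = (4 D₂)^k`. The diagonal pairs contribute `1` each, `4^k` in total, and
dividing `(4 D₂)^k - 4^k` by `2^(2k) = 4^k` gives `D₂^k - 1`. -/

open Finset

def finTwoMulArrowEquiv (α : Type*) (k : ℕ) : (Fin (2 * k) → α) ≃ (Fin k → α × α) :=
  ((finProdFinEquiv.trans (finCongr (Nat.mul_comm k 2))).arrowCongr (Equiv.refl α)).symm.trans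
    ((Equiv.curry _ _ _).trans ((Equiv.refl (Fin k)).arrowCongr (finTwoArrowEquiv α)))

theorem finTwoMulArrowEquiv_apply {α : Type*} {k : ℕ} (f : Fin (2 * k) → α) (j : Fin k) :
    finTwoMulArrowEquiv α k f j = (f ⟨2 * j, by omega⟩, f ⟨2 * j + 1, by omega⟩) :=
  Prod.ext (congrArg f (Fin.ext (zero_add _))) (congrArg f (Fin.ext (add_comm _ _)))

theorem sum_filter_ne_comp_equiv {α β M : Type*} [Fintype α] [Fintype β] [DecidableEq α]
    [DecidableEq β] [AddCommMonoid M] (e : α ≃ β) (f : β → β → M) :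
    ∑ p ∈ univ.filter (fun p : α × α => p.1 ≠ p.2), f (e p.1) (e p.2) =
      ∑ p ∈ univ.filter (fun p : β × β => p.1 ≠ p.2), f p.1 p.2 :=
  sum_equiv (e.prodCongr e) (by simp) (by simp)

theorem sum_pair_prod_apply_eq_pow {ι σ R : Type*} [Fintype ι] [Fintype σ] [DecidableEq ι]
    [CommSemiring R] (g : σ → σ → R) :
    ∑ p : (ι → σ) × (ι → σ), ∏ j, g (p.1 j) (p.2 j) = (∑ a, ∑ b, g a b) ^ Fintype.card ι := by
  rw [← Fintype.sum_prod_type', ← card_univ, ← prod_const, Fintype.prod_sum]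
  exact ((Equiv.arrowProdEquivProdArrow ι _ _).sum_comp _).symm

theorem sum_filter_ne_prod_apply {ι σ R : Type*} [Fintype ι] [Fintype σ] [DecidableEq ι]
    [DecidableEq σ] [CommRing R] (g : σ → σ → R) (hg : ∀ a, g a a = 1) :
    ∑ p ∈ univ.filter (fun p : (ι → σ) × (ι → σ) => p.1 ≠ p.2), ∏ j, g (p.1 j) (p.2 j) =
      (∑ a, ∑ b, g a b) ^ Fintype.card ι - Fintype.card σ ^ Fintype.card ι := by
  have hdiag : ∑ p ∈ univ.filter (fun p : (ι → σ) × (ι → σ) => ¬ p.1 ≠ p.2),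
      ∏ j, g (p.1 j) (p.2 j) = Fintype.card σ ^ Fintype.card ι := by
    simp [sum_filter, Fintype.sum_prod_type, hg]
  rw [eq_sub_iff_add_eq, ← hdiag, sum_filter_add_sum_filter_not, sum_pair_prod_apply_eq_pow]

/-- The paper's identity D₂: when an even pattern (m = 2k channels) is probed by k
disjointly distributed two-mode probes whose sub-fidelities take the four degenerate
values F01, F12, F11, F02, the normalized fidelity sum over distinct pattern pairs
equals (1 + F01 + F12 + (F11 + F02)/2)^k − 1. -/
theorem tmsv_disjoint_uniform_fidelity_sum (k m : ℕ) (hm : m = 2 * k)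
    (g : (Bool × Bool) → (Bool × Bool) → ℝ) (F01 F12 F11 F02 : ℝ)
    (hgdiag : ∀ p, g p p = 1)
    (h01a : g (false, false) (false, true) = F01)
    (h01b : g (false, false) (true, false) = F01)
    (h01c : g (false, true) (false, false) = F01)
    (h01d : g (true, false) (false, false) = F01)
    (h12a : g (false, true) (true, true) = F12)
    (h12b : g (true, false) (true, true) = F12)
    (h12c : g (true, true) (false, true) = F12)
    (h12d : g (true, true) (true, false) = F12)
    (h11a : g (false, true) (true, false) = F11)
    (h11b : g (true, false) (false, true) = F11)
    (h02a : g (false, false) (true, true) = F02)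
    (h02b : g (true, true) (false, false) = F02) :
    (1 / (2 : ℝ) ^ m) *
      (∑ p ∈ (Finset.univ : Finset ((Fin m → Bool) × (Fin m → Bool))).filter
          (fun p => p.1 ≠ p.2),
        ∏ j : Fin k,
          g (p.1 ⟨2 * (j : ℕ), by have := j.isLt; omega⟩,
              p.1 ⟨2 * (j : ℕ) + 1, by have := j.isLt; omega⟩)
            (p.2 ⟨2 * (j : ℕ), by have := j.isLt; omega⟩,
              p.2 ⟨2 * (j : ℕ) + 1, by have := j.isLt; omega⟩)) =
      (1 + F01 + F12 + (F11 + F02) / 2) ^ k - 1 := by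
  subst hm
  have hpairs :=
    sum_filter_ne_comp_equiv (finTwoMulArrowEquiv Bool k) fun u v => ∏ j, g (u j) (v j)
  simp only [finTwoMulArrowEquiv_apply] at hpairs
  have hsum : ∑ a, ∑ b, g a b = 4 * (1 + F01 + F12 + (F11 + F02) / 2) := by
    simp only [Fintype.sum_prod_type, Fintype.sum_bool, hgdiag, h01a, h01b, h01c, h01d,
      h12a, h12b, h12c, h12d, h11a, h11b, h02a, h02b]
    ring
  rw [hpairs, sum_filter_ne_prod_apply g hgdiag, hsum, Fintype.card_fin, Fintype.card_prod,
    Fintype.card_bool, pow_mul, mul_pow]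
  field_simp
  ring
end

section
/- Let η_B, η_T be reals with 0 < η_B < 1 and 0 < η_T < 1, and set s = η_B + η_T and κ₁ = η_B η_T (1 − η_T)(1 − η_B) > 0. For N ≥ 0 define κ₂(N) = 1 + N(2 − s)s + 4N²κ₁ and F₀₂(N) = ( 2N√κ₁ + √(κ₂(N)) ) / ( 1 + N(2 − s)s ). Then F₀₂(N) tends to 4√( κ₁ / ((s − 2)² s²) ) = 4√κ₁ / ((2 − s)s) as N → ∞. -/
/-!
Dividing numerator and denominator by `N`, the fidelity becomes
`(2√κ₁ + √κ₂(N) / N) / (1 / N + (2 - s) s)`, and `√κ₂(N) / N → √(4κ₁) = 2√κ₁` because `κ₂` is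
quadratic in `N` with leading coefficient `4κ₁`. Since `0 < s < 2`, the square root of
`κ₁ / ((s - 2)² s²)` is `√κ₁ / ((2 - s) s)`.
-/

open Filter Topology Real

lemma tendsto_sqrt_quadratic_div_atTop (a b c : ℝ) :
    Tendsto (fun N => √(a + b * N + c * N ^ 2) / N) atTop (𝓝 √c) := by
  have hinv : Tendsto (fun N : ℝ => N⁻¹) atTop (𝓝 0) := tendsto_inv_atTop_zero
  have hpoly : Tendsto (fun N : ℝ => a * N⁻¹ ^ 2 + b * N⁻¹ + c) atTop (𝓝 c) := by
    simpa using ((hinv.pow 2).const_mul a).add (hinv.const_mul b) |>.add_const c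
  refine (continuous_sqrt.tendsto c |>.comp hpoly).congr' ?_
  filter_upwards [eventually_gt_atTop 0] with N hN
  have hquad : a + b * N + c * N ^ 2 = N ^ 2 * (a * N⁻¹ ^ 2 + b * N⁻¹ + c) := by
    field_simp
  rw [Function.comp_apply, hquad, sqrt_mul (sq_nonneg N), sqrt_sq hN.le,
    mul_div_cancel_left₀ _ hN.ne']

lemma tendsto_add_div_one_add_mul_atTop {f : ℝ → ℝ} {p q L : ℝ} (hq : q ≠ 0)
    (hf : Tendsto (fun N => f N / N) atTop (𝓝 L)) :
    Tendsto (fun N => (p * N + f N) / (1 + q * N)) atTop (𝓝 ((p + L) / q)) := by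
  have hden : Tendsto (fun N : ℝ => N⁻¹ + q) atTop (𝓝 q) := by
    simpa using tendsto_inv_atTop_zero.add_const q
  refine ((hf.const_add p).div hden hq).congr' ?_
  filter_upwards [eventually_gt_atTop 0] with N hN
  simp only [Pi.div_apply]
  field_simp

lemma sqrt_div_sq_mul_sq {x a b : ℝ} (hab : 0 ≤ a * b) :
    √(x / ((-a) ^ 2 * b ^ 2)) = √x / (a * b) := by
  rw [sqrt_div' _ (by positivity), neg_sq, ← mul_pow, sqrt_sq hab]

/-- The unassisted TMSV sub-fidelity F₀₂ for pure-loss channel patterns [0,0] vs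
[1,1]: with s = η_B + η_T and κ₁ = η_Bη_T(1−η_T)(1−η_B) > 0, the fidelity
F₀₂(N) = (2N√κ₁ + √(κ₂(N)))/(1 + N(2−s)s) with κ₂(N) = 1 + N(2−s)s + 4N²κ₁
tends to 4√(κ₁/((s−2)²s²)) = 4√κ₁/((2−s)s) as the signal energy N → ∞. -/
theorem F02_pure_loss_tendsto (ηB ηT : ℝ)
    (hB0 : 0 < ηB) (hB1 : ηB < 1) (hT0 : 0 < ηT) (hT1 : ηT < 1)
    (s κ₁ : ℝ) (hs : s = ηB + ηT) (hκ₁ : κ₁ = ηB * ηT * (1 - ηT) * (1 - ηB))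
    (κ₂ : ℝ → ℝ) (hκ₂ : ∀ N, κ₂ N = 1 + N * (2 - s) * s + 4 * N ^ 2 * κ₁) :
    0 < κ₁ ∧
      Filter.Tendsto
        (fun N : ℝ =>
          (2 * N * Real.sqrt κ₁ + Real.sqrt (κ₂ N)) / (1 + N * (2 - s) * s))
        Filter.atTop (nhds (4 * Real.sqrt (κ₁ / ((s - 2) ^ 2 * s ^ 2)))) ∧
      4 * Real.sqrt (κ₁ / ((s - 2) ^ 2 * s ^ 2)) =
        4 * Real.sqrt κ₁ / ((2 - s) * s) := by
  have hκ₁_pos : 0 < κ₁ := by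
    have := sub_pos.2 hT1
    have := sub_pos.2 hB1
    rw [hκ₁]
    positivity
  have hd : 0 < (2 - s) * s := by
    rw [hs]
    exact mul_pos (by linarith) (by linarith)
  have hlim_eq : 4 * √(κ₁ / ((s - 2) ^ 2 * s ^ 2)) = 4 * √κ₁ / ((2 - s) * s) := by
    rw [← neg_sub, sqrt_div_sq_mul_sq hd.le, mul_div_assoc]
  refine ⟨hκ₁_pos, ?_, hlim_eq⟩
  have hsqrt : Tendsto (fun N => √(κ₂ N) / N) atTop (𝓝 (2 * √κ₁)) := by
    have h := tendsto_sqrt_quadratic_div_atTop 1 ((2 - s) * s) (4 * κ₁)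
    rw [sqrt_mul' 4 hκ₁_pos.le, show (4 : ℝ) = 2 ^ 2 by norm_num, sqrt_sq zero_le_two] at h
    convert h using 4 with N
    rw [hκ₂]
    ring
  convert tendsto_add_div_one_add_mul_atTop (p := 2 * √κ₁) hd.ne' hsqrt using 2 with N
  · ring_nf
  · rw [hlim_eq]
    ring
end
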